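/- If an atom A is true or inadmissible in every three-valued model of a disjunctive definite program P, then A ∈ SS (the success set of P). -/

import Mathlib

open Classical

/-- The three truth values: true, false, inadmissible. -/
inductive TV : Type where
  | t : TV
  | f : TV
  | i : TV
deriving DecidableEq

/-- Kleene strong three-valued conjunction. -/
def TV.and : TV → TV → TV
  | .t, .t => .t
  | .f, _ => .f
  | _, .f => .f
  | _, _ => .i

/-- Kleene strong three-valued disjunction. -/
def TV.or : TV → TV → TV
  | .f, .f => .f
  | .t, _ => .t
  | _, .t => .t
  | _, _ => .i

/-- Ground body formulas over a set `α` of ground atoms: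
built from atoms using binary conjunction and disjunction. -/
inductive Body (α : Type*) : Type _ where
  | atom : α → Body α
  | conj : Body α → Body α → Body α
  | disj : Body α → Body α → Body α

variable {α : Type*}

/-- Value of an atom in the interpretation `⟨I,T⟩` (inadmissible atoms `I`,
true atoms `T`, all other atoms false). -/
noncomputable def atomVal (I T : Set α) (a : α) : TV :=
  if a ∈ T then TV.t else if a ∈ I then TV.i else TV.f

/-- Kleene strong three-valued evaluation of a body formula in `⟨I,T⟩`. -/
noncomputable def beval (I T : Set α) : Body α → TV
  | .atom a => atomVal I T a
  | .conj b c => TV.and (beval I T b) (beval I T c)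
  | .disj b c => TV.or (beval I T b) (beval I T c)

/-- A (ground) disjunctive definite program: a set of ground clause instances
`H ← B`, represented as pairs `(H, B)`. -/
abbrev Program (α : Type*) := Set (α × Body α)

/-- `⟨I,T⟩` is a model of `P`: no clause instance `H ← B` in `P` has `H`
evaluating to F while `B` evaluates to T or I (i.e. head F implies body F). -/
def IsModel (P : Program α) (I T : Set α) : Prop :=
  ∀ c ∈ P, atomVal I T c.1 = TV.f → beval I T c.2 = TV.f

/-- Two-valued truth of a body formula in the two-valued interpretation in
which exactly the atoms of `S` are true. -/
def twoVal (S : Set α) : Body α → Prop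
  | .atom a => a ∈ S
  | .conj b c => twoVal S b ∧ twoVal S c
  | .disj b c => twoVal S b ∨ twoVal S c

/-- The two-valued immediate consequence operator `T_P`. -/
def TP (P : Program α) (S : Set α) : Set α :=
  {a | ∃ c ∈ P, c.1 = a ∧ twoVal S c.2}

theorem twoVal_mono {S S' : Set α} (h : S ⊆ S') :
    ∀ B : Body α, twoVal S B → twoVal S' B := by
  intro B
  induction B with
  | atom a => exact fun hb => h hb
  | conj b c ihb ihc => exact fun hb => ⟨ihb hb.1, ihc hb.2⟩
  | disj b c ihb ihc =>
      exact fun hb => hb.elim (fun x => Or.inl (ihb x)) (fun y => Or.inr (ihc y))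

/-- `T_P` as a monotone map on sets of atoms. -/
def TPhom (P : Program α) : Set α →o Set α :=
  ⟨TP P, by
    intro S S' h a ha
    obtain ⟨c, hc, he, hb⟩ := ha
    exact ⟨c, hc, he, twoVal_mono h _ hb⟩⟩

/-- The success set of `P`: the least fixpoint of `T_P`
(equal to the least two-valued Herbrand model of `P`). -/
def SS (P : Program α) : Set α := OrderHom.lfp (TPhom P)

/-! With no inadmissible atoms, Kleene evaluation collapses to two-valued evaluation, so a
two-valued model of `P` (a set closed under `T_P`) is also a three-valued model. The success
set is such a set; as `A` is not false there and nothing is inadmissible, `A ∈ SS P`. -/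

theorem beval_empty (T : Set α) (B : Body α) :
    beval ∅ T B = if twoVal T B then TV.t else TV.f := by
  induction B with
  | atom a => by_cases ha : a ∈ T <;> simp [beval, atomVal, twoVal, ha]
  | conj b c ihb ihc =>
      rw [beval, ihb, ihc]
      by_cases hb : twoVal T b <;> by_cases hc : twoVal T c <;> simp [twoVal, TV.and, hb, hc]
  | disj b c ihb ihc =>
      rw [beval, ihb, ihc]
      by_cases hb : twoVal T b <;> by_cases hc : twoVal T c <;> simp [twoVal, TV.or, hb, hc]

theorem isModel_empty_of_TP_subset {P : Program α} {S : Set α} (hS : TP P S ⊆ S) :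
    IsModel P ∅ S := by
  intro c hc hhead
  have hbody : ¬ twoVal S c.2 := fun hb => by
    simp [atomVal, hS ⟨c, hc, rfl, hb⟩] at hhead
  simp [beval_empty, hbody]

theorem TP_SS_subset (P : Program α) : TP P (SS P) ⊆ SS P :=
  (OrderHom.map_lfp (TPhom P)).le

/-- If an atom `A` is true or inadmissible in every three-valued
model of `P`, then `A` is in the success set of `P`. -/
theorem in_SS_of_nonfalse_in_all_models {α : Type*} (P : Program α) (A : α)
    (h : ∀ I T : Set α, Disjoint I T → IsModel P I T → A ∈ T ∨ A ∈ I) :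
    A ∈ SS P := by
  have hmodel : IsModel P ∅ (SS P) := isModel_empty_of_TP_subset (TP_SS_subset P)
  exact (h ∅ (SS P) (Set.empty_disjoint _) hmodel).resolve_right (Set.notMem_empty A)
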